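/- L∞ estimate for the discounted values: assume (H1) and let b^i_α, f^i_α (i = 1,2) satisfy (H2) with the same constants K, L, let H^i_α(x,p) = sup_{a∈A}{−b^i_α(x,a)p − f^i_α(x,a)}, and let F^i : Γ → ℝ be bounded. For λ ∈ (0,1) let v^λ_i be the classical solution of the discounted problem with Hamiltonian H^i_α(x,p) + F^i_α(x). Then λ‖v^λ_1 − v^λ_2‖_{L∞(Γ)} ≤ max_{α∈𝒜} ( K̄ max_{x,a}|b^1_α(x,a)−b^2_α(x,a)| + max_{x,a}|f^1_α(x,a)−f^2_α(x,a)| + max_x|F^1_α(x)−F^2_α(x)| ), where K̄ = C₁(1+K+L) is the a priori C^{2,θ}(Γ) bound for v^λ_i − ⟨v^λ_i⟩. -/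

import Mathlib

open scoped Classical
open Set MeasureTheory

noncomputable section

/-- A finite network `Γ`: finitely many edges indexed by `ι` and vertices indexed by `I`.
Edge `α` has length `ℓ α > 0`; it is parametrized (isometrically) by `[0, ℓ α]`, joining the
vertex `e0 α` (at parameter `0`) to the vertex `e1 α` (at parameter `ℓ α`).
A function on the network is represented edgewise as `v : ι → ℝ → ℝ`,
`v α` being `v_α = v|_{Γ_α} ∘ π_α`, read through the parametrization. -/
structure Network where
  (ι : Type)
  (I : Type)
  [fintE : Fintype ι]
  [fintV : Fintype I]
  (ℓ : ι → ℝ)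
  (ℓ_pos : ∀ α, 0 < ℓ α)
  (e0 : ι → I)
  (e1 : ι → I)
  (no_loop : ∀ α, e0 α ≠ e1 α)

attribute [instance] Network.fintE Network.fintV

namespace Network

variable (Γ : Network)

/-- the parameter interval `[0, ℓ_α]` of the edge `α` -/
def edge (α : Γ.ι) : Set ℝ := Icc 0 (Γ.ℓ α)

/-- `α` is an edge adjacent to the vertex `i` -/
def incident (α : Γ.ι) (i : Γ.I) : Prop := Γ.e0 α = i ∨ Γ.e1 α = i

/-- the set `𝒜_i` of edges adjacent to the vertex `i` -/
def adj (i : Γ.I) : Finset Γ.ι := Finset.univ.filter fun α => Γ.incident α i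

/-- the network is connected -/
def Conn : Prop :=
  ∀ i j : Γ.I, Relation.ReflTransGen (fun i j => ∃ α, Γ.incident α i ∧ Γ.incident α j) i j

/-- first derivative `∂ v_α` along the edge (one-sided at the endpoints) -/
def d1 (v : Γ.ι → ℝ → ℝ) (α : Γ.ι) : ℝ → ℝ := derivWithin (v α) (Γ.edge α)

/-- second derivative `∂² v_α` along the edge -/
def d2 (v : Γ.ι → ℝ → ℝ) (α : Γ.ι) : ℝ → ℝ := derivWithin (Γ.d1 v α) (Γ.edge α)

/-- the value of `v` at the vertex `i` seen from the edge `α` -/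
def valAt (v : Γ.ι → ℝ → ℝ) (α : Γ.ι) (i : Γ.I) : ℝ :=
  if Γ.e0 α = i then v α 0 else v α (Γ.ℓ α)

/-- the outward derivative `∂_α v (ν_i)` at the vertex `i` along the edge `α`:
`∂_α v(ν_i) = lim_{h→0⁺} (v_α(0) - v_α(h))/h` if `ν_i = π_α(0)` and
`∂_α v(ν_i) = lim_{h→0⁺} (v_α(ℓ_α) - v_α(ℓ_α - h))/h` if `ν_i = π_α(ℓ_α)`. -/
def outDeriv (v : Γ.ι → ℝ → ℝ) (α : Γ.ι) (i : Γ.I) : ℝ :=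
  if Γ.e0 α = i then -(Γ.d1 v α 0) else Γ.d1 v α (Γ.ℓ α)

/-- `v` is continuous at the vertices (values from adjacent edges agree) -/
def VertexCont (v : Γ.ι → ℝ → ℝ) : Prop :=
  ∀ i : Γ.I, ∀ α ∈ Γ.adj i, ∀ β ∈ Γ.adj i, Γ.valAt v α i = Γ.valAt v β i

/-- `v ∈ C^m(Γ)` -/
def Cm (m : ℕ) (v : Γ.ι → ℝ → ℝ) : Prop :=
  (∀ α, ContDiffOn ℝ m (v α) (Γ.edge α)) ∧ Γ.VertexCont v

/-- sup norm of a function on the edge `α` -/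
def esup (g : ℝ → ℝ) (α : Γ.ι) : ℝ := sSup ((fun y => |g y|) '' Γ.edge α)

/-- the `C²(Γ)` norm `‖v‖ = Σ_α Σ_{k ≤ 2} ‖∂^k v_α‖_∞` -/
def C2norm (v : Γ.ι → ℝ → ℝ) : ℝ :=
  ∑ α, (Γ.esup (v α) α + Γ.esup (Γ.d1 v α) α + Γ.esup (Γ.d2 v α) α)

/-- the mean `⟨v⟩ = ∫_Γ v dx` -/
def avg (v : Γ.ι → ℝ → ℝ) : ℝ := ∑ α, ∫ y in (0:ℝ)..(Γ.ℓ α), v α y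

end Network

/-- the `σ`-Hölder seminorm `[g]_{σ,s}` of `g` on the set `s` -/
def holderSemi (σ : ℝ) (g : ℝ → ℝ) (s : Set ℝ) : ℝ :=
  sSup {c | ∃ y ∈ s, ∃ z ∈ s, y ≠ z ∧ c = |g y - g z| / |y - z| ^ σ}

namespace Network

variable (Γ : Network)

/-- the `C^{2,θ}(Γ)` norm -/
def C2θnorm (θ : ℝ) (v : Γ.ι → ℝ → ℝ) : ℝ :=
  Γ.C2norm v + ⨆ α, holderSemi θ (Γ.d2 v α) (Γ.edge α)

/-- classical solution of the discounted HJ problem on `Γ` with Hamiltonian `H` and discount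
`lam`:  `-μ_α ∂²v + H_α(x, ∂v) + lam v = 0` inside every edge, together with the Kirchhoff
transmission condition `Σ_{α ∈ 𝒜_i} γ_{iα} μ_α ∂_α v(ν_i) = 0` at every vertex
(continuity at the vertices is part of `Γ.Cm 2 v`). -/
def IsDiscountedSol (μ : Γ.ι → ℝ) (γ : Γ.I → Γ.ι → ℝ) (H : Γ.ι → ℝ → ℝ → ℝ)
    (lam : ℝ) (v : Γ.ι → ℝ → ℝ) : Prop :=
  Γ.Cm 2 v ∧
  (∀ α, ∀ y ∈ Ioo 0 (Γ.ℓ α),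
    -(μ α) * Γ.d2 v α y + H α y (Γ.d1 v α y) + lam * v α y = 0) ∧
  (∀ i : Γ.I, ∑ α ∈ Γ.adj i, γ i α * μ α * Γ.outDeriv v α i = 0)

/-- classical solution of the ergodic HJ problem on `Γ` with Hamiltonian `H`:
`-μ_α ∂²v + H_α(x, ∂v) + ρ = 0` inside every edge, Kirchhoff condition at every vertex,
and the normalization `⟨v⟩ = 0`. -/
def IsErgodicSol (μ : Γ.ι → ℝ) (γ : Γ.I → Γ.ι → ℝ) (H : Γ.ι → ℝ → ℝ → ℝ)
    (v : Γ.ι → ℝ → ℝ) (ρ : ℝ) : Prop :=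
  Γ.Cm 2 v ∧
  (∀ α, ∀ y ∈ Ioo 0 (Γ.ℓ α),
    -(μ α) * Γ.d2 v α y + H α y (Γ.d1 v α y) + ρ = 0) ∧
  (∀ i : Γ.I, ∑ α ∈ Γ.adj i, γ i α * μ α * Γ.outDeriv v α i = 0) ∧
  Γ.avg v = 0

/-- assumption (H1): `μ_α > 0`, `γ_{iα} > 0` and `Σ_{α ∈ 𝒜_i} γ_{iα} μ_α = 1` -/
def H1cond (μ : Γ.ι → ℝ) (γ : Γ.I → Γ.ι → ℝ) : Prop :=
  (∀ α, 0 < μ α) ∧ (∀ i : Γ.I, ∀ α ∈ Γ.adj i, 0 < γ i α) ∧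
  (∀ i : Γ.I, ∑ α ∈ Γ.adj i, γ i α * μ α = 1)

end Network

/-- the Bellman Hamiltonian built from the control data `b`, `f`:
`H_α(x, p) = sup_{a ∈ A} { -b_α(x,a) p - f_α(x,a) }`. -/
def ham (Γ : Network) (A : Type) (b f : Γ.ι → ℝ → A → ℝ) (α : Γ.ι) (y p : ℝ) : ℝ :=
  ⨆ a : A, (-(b α y a) * p - f α y a)

/-- assumption (H2): `b_α, f_α : Γ_α × A → ℝ` continuous, bounded by `K`,
and Lipschitz in `x` with constant `L`, uniformly in `a ∈ A` -/
def H2cond (Γ : Network) (A : Type) [TopologicalSpace A]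
    (b f : Γ.ι → ℝ → A → ℝ) (K L : ℝ) : Prop :=
  ∀ α : Γ.ι,
    ContinuousOn (fun q : ℝ × A => b α q.1 q.2) (Γ.edge α ×ˢ (univ : Set A)) ∧
    ContinuousOn (fun q : ℝ × A => f α q.1 q.2) (Γ.edge α ×ˢ (univ : Set A)) ∧
    (∀ y ∈ Γ.edge α, ∀ a : A, |b α y a| ≤ K ∧ |f α y a| ≤ K) ∧
    (∀ y ∈ Γ.edge α, ∀ z ∈ Γ.edge α, ∀ a : A,
      |b α y a - b α z a| ≤ L * |y - z| ∧ |f α y a - f α z a| ≤ L * |y - z|)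

/-- `max_{x ∈ Γ_α, a ∈ A} |g_α(x,a)|` -/
def supAbsBF (Γ : Network) (A : Type) (g : Γ.ι → ℝ → A → ℝ) (α : Γ.ι) : ℝ :=
  sSup {c | ∃ y ∈ Γ.edge α, ∃ a : A, c = |g α y a|}

/-! Let `w = v₁ - v₂` attain its maximum over `Γ` at `x₀` on the edge `Γ_α`. If `x₀` is a vertex,
every outward derivative of `w` there is nonnegative, and the Kirchhoff condition with positive
weights forces all of them to vanish; so in every case `∂w(x₀) = 0` and `∂²w(x₀) ≤ 0`. Subtracting
the two equations at `x₀` (they hold inside the edge and pass to its endpoints by continuity)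
gives `λ w(x₀) ≤ H²(x₀, p) - H¹(x₀, p) + |F¹ - F²|` with `p = ∂v₁(x₀) = ∂v₂(x₀)`, and
`H² - H¹ ≤ |p| max |b¹ - b²| + max |f¹ - f²|` with `|p| ≤ K̄`. Exchanging `v₁` and `v₂` bounds
`|w|`. -/

open Filter Topology

section IntervalCalculus

variable {g : ℝ → ℝ} {a b x : ℝ}

theorem IsMaxOn.derivWithin_Icc_nonpos (hmax : IsMaxOn g (Icc a b) x) (hx : x ∈ Icc a b)
    (hxb : x < b) : derivWithin g (Icc a b) x ≤ 0 := by
  have hseg : segment ℝ x (x + (b - x)) ⊆ Icc a b := by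
    rw [add_sub_cancel, segment_eq_Icc hxb.le]
    exact Icc_subset_Icc_left hx.1
  have h := hmax.localize.fderivWithin_nonpos (mem_posTangentConeAt_of_segment_subset hseg)
  rw [← mul_one (b - x), ← smul_eq_mul, ContinuousLinearMap.map_smul, fderivWithin_derivWithin,
    smul_eq_mul] at h
  exact nonpos_of_mul_nonpos_right h (sub_pos.2 hxb)

theorem IsMaxOn.derivWithin_Icc_nonneg (hmax : IsMaxOn g (Icc a b) x) (hx : x ∈ Icc a b)
    (hax : a < x) : 0 ≤ derivWithin g (Icc a b) x := by
  have hseg : segment ℝ x (x + (a - x)) ⊆ Icc a b := by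
    rw [add_sub_cancel, segment_symm, segment_eq_Icc hax.le]
    exact Icc_subset_Icc_right hx.2
  have h := hmax.localize.fderivWithin_nonpos (mem_posTangentConeAt_of_segment_subset hseg)
  rw [← mul_one (a - x), ← smul_eq_mul, ContinuousLinearMap.map_smul, fderivWithin_derivWithin,
    smul_eq_mul] at h
  exact nonneg_of_mul_nonpos_right h (sub_neg.2 hax)

theorem deriv_deriv_eq_derivWithin_derivWithin_Icc {y : ℝ} (hy : y ∈ Ioo a b) :
    deriv (deriv g) y = derivWithin (derivWithin g (Icc a b)) (Icc a b) y := by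
  have hderiv : derivWithin g (Icc a b) =ᶠ[𝓝 y] deriv g := by
    filter_upwards [Ioo_mem_nhds hy.1 hy.2] with z hz
    exact derivWithin_of_mem_nhds (Icc_mem_nhds hz.1 hz.2)
  rw [← hderiv.deriv_eq, derivWithin_of_mem_nhds (Icc_mem_nhds hy.1 hy.2)]

theorem IsMaxOn.derivWithin_derivWithin_Icc_nonpos (hab : a < b)
    (hg : ContDiffOn ℝ 2 g (Icc a b)) (hmax : IsMaxOn g (Icc a b) x) (hx : x ∈ Icc a b)
    (hd : derivWithin g (Icc a b) x = 0) :
    derivWithin (derivWithin g (Icc a b)) (Icc a b) x ≤ 0 := by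
  set s := Icc a b
  have hs : UniqueDiffOn ℝ s := uniqueDiffOn_Icc hab
  by_contra! hpos
  have hg2 : ContinuousOn (derivWithin (derivWithin g s) s) s :=
    (hg.derivWithin hs (by norm_num)).continuousOn_derivWithin hs le_rfl
  obtain ⟨δ, hδ, hball⟩ := Metric.mem_nhdsWithin_iff.1
    ((hg2 x hx).eventually (eventually_gt_nhds hpos))
  -- near `x` the function is strictly convex, so it lies strictly above its horizontal tangent
  set U := s ∩ Ioo (x - δ) (x + δ)
  have hUx : Ioo (x - δ) (x + δ) ∈ 𝓝 x := Ioo_mem_nhds (by linarith) (by linarith)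
  have hconv : StrictConvexOn ℝ U g := by
    refine strictConvexOn_of_deriv2_pos ((convex_Icc a b).inter (convex_Ioo _ _))
      (hg.continuousOn.mono inter_subset_left) fun y hy => ?_
    rw [interior_inter, interior_Icc, interior_Ioo] at hy
    rw [Function.iterate_succ_apply, Function.iterate_one,
      deriv_deriv_eq_derivWithin_derivWithin_Icc hy.1]
    refine hball ⟨?_, Ioo_subset_Icc_self hy.1⟩
    rw [Metric.mem_ball, Real.dist_eq, abs_sub_lt_iff]
    constructor <;> linarith [hy.2.1, hy.2.2]
  have hdU : derivWithin g U x = 0 := by rw [derivWithin_inter hUx, hd]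
  have hdiff : DifferentiableWithinAt ℝ g U x :=
    ((hg.differentiableOn (by norm_num)) x hx).mono inter_subset_left
  have hxU : x ∈ U := ⟨hx, mem_of_mem_nhds hUx⟩
  rcases hx.2.lt_or_eq with hxb | hxb
  · obtain ⟨y, hxy, hy⟩ := exists_between (lt_min hxb (show x < x + δ by linarith))
    rw [lt_min_iff] at hy
    have hyU : y ∈ U := ⟨⟨by linarith [hx.1], hy.1.le⟩, by linarith, hy.2⟩
    have hslope := hconv.derivWithin_lt_slope hxU hyU hxy hdiff
    rw [hdU, slope_def_field] at hslope
    have hgy : g y ≤ g x := hmax hyU.1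
    exact (div_nonpos_of_nonpos_of_nonneg (by linarith) (by linarith)).not_gt hslope
  · obtain ⟨y, hy, hyx⟩ := exists_between (max_lt (hxb ▸ hab) (show x - δ < x by linarith))
    rw [max_lt_iff] at hy
    have hyU : y ∈ U := ⟨⟨hy.1.le, by linarith [hx.2]⟩, hy.2, by linarith⟩
    have hslope := hconv.slope_lt_derivWithin hyU hxU hyx hdiff
    rw [hdU, slope_def_field] at hslope
    have hgy : g y ≤ g x := hmax hyU.1
    exact (div_nonneg (by linarith) (by linarith)).not_gt hslope

theorem ContinuousOn.abs_le_of_forall_Ioo {T : ℝ → ℝ} {a b c : ℝ} (hab : a < b)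
    (hT : ContinuousOn T (Icc a b)) (h : ∀ y ∈ Ioo a b, |T y| ≤ c) :
    ∀ y ∈ Icc a b, |T y| ≤ c := by
  rw [← closure_Ioo hab.ne] at hT ⊢
  exact le_on_closure h hT.abs continuousOn_const

end IntervalCalculus

section BellmanHamiltonian

variable {Γ : Network} {A : Type} [TopologicalSpace A]
  {b f b' f' : Γ.ι → ℝ → A → ℝ} {K L : ℝ} {α : Γ.ι} {y z : ℝ}

theorem H2cond.bound (hbf : H2cond Γ A b f K L) (hy : y ∈ Γ.edge α) (a : A) :
    |b α y a| ≤ K ∧ |f α y a| ≤ K :=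
  (hbf α).2.2.1 y hy a

theorem H2cond.lipschitz (hbf : H2cond Γ A b f K L) (hy : y ∈ Γ.edge α) (hz : z ∈ Γ.edge α)
    (a : A) : |b α y a - b α z a| ≤ L * |y - z| ∧ |f α y a - f α z a| ≤ L * |y - z| :=
  (hbf α).2.2.2 y hy z hz a

theorem H2cond.bddAbove_range (hbf : H2cond Γ A b f K L) (hz : z ∈ Γ.edge α) (q : ℝ) :
    BddAbove (range fun a => -b α z a * q - f α z a) := by
  refine ⟨K * |q| + K, ?_⟩
  rintro _ ⟨a, rfl⟩
  obtain ⟨hb, hf⟩ := hbf.bound hz a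
  have hbq : -(b α z a * q) ≤ K * |q| :=
    (neg_le_abs _).trans <| by rw [abs_mul]; exact mul_le_mul_of_nonneg_right hb (abs_nonneg q)
  linarith [neg_le_abs (f α z a)]

variable [Nonempty A]

theorem H2cond.ham_le_ham_add (hbf : H2cond Γ A b f K L) (hz : z ∈ Γ.edge α) {p q c : ℝ}
    (h : ∀ a, -b' α y a * p - f' α y a ≤ -b α z a * q - f α z a + c) :
    ham Γ A b' f' α y p ≤ ham Γ A b f α z q + c :=
  ciSup_le fun a => (h a).trans (add_le_add (le_ciSup (hbf.bddAbove_range hz q) a) le_rfl)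

theorem H2cond.ham_sub_ham_le (hbf : H2cond Γ A b f K L) (hy : y ∈ Γ.edge α)
    (hz : z ∈ Γ.edge α) (p q : ℝ) :
    ham Γ A b f α y p - ham Γ A b f α z q ≤ K * |p - q| + L * |y - z| * (1 + |q|) := by
  refine sub_le_iff_le_add'.2 (hbf.ham_le_ham_add hz fun a => ?_)
  obtain ⟨hb, -⟩ := hbf.bound hy a
  obtain ⟨hbL, hfL⟩ := hbf.lipschitz hy hz a
  have h₁ : -(b α y a * (p - q)) ≤ K * |p - q| :=
    (neg_le_abs _).trans <| by rw [abs_mul]; exact mul_le_mul_of_nonneg_right hb (abs_nonneg _)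
  have h₂ : -((b α y a - b α z a) * q) ≤ L * |y - z| * |q| :=
    (neg_le_abs _).trans <| by rw [abs_mul]; exact mul_le_mul_of_nonneg_right hbL (abs_nonneg _)
  have h₃ : -(f α y a - f α z a) ≤ L * |y - z| := (neg_le_abs _).trans hfL
  linarith

theorem H2cond.abs_ham_sub_ham_le (hbf : H2cond Γ A b f K L) (hy : y ∈ Γ.edge α)
    (hz : z ∈ Γ.edge α) (p q : ℝ) :
    |ham Γ A b f α y p - ham Γ A b f α z q| ≤ K * |p - q| + L * |y - z| * (1 + |p| + |q|) := by
  obtain ⟨a⟩ := ‹Nonempty A›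
  have hL : 0 ≤ L * |y - z| := (abs_nonneg _).trans (hbf.lipschitz hy hz a).1
  have h₁ := hbf.ham_sub_ham_le hy hz p q
  have h₂ := hbf.ham_sub_ham_le hz hy q p
  rw [abs_sub_comm z y, abs_sub_comm q p] at h₂
  have hp := mul_nonneg hL (abs_nonneg p)
  have hq := mul_nonneg hL (abs_nonneg q)
  rw [abs_le]
  constructor <;> nlinarith

theorem H2cond.continuousOn_ham_comp (hbf : H2cond Γ A b f K L) {φ : ℝ → ℝ}
    (hφ : ContinuousOn φ (Γ.edge α)) :
    ContinuousOn (fun y => ham Γ A b f α y (φ y)) (Γ.edge α) := by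
  intro x hx
  rw [ContinuousWithinAt, tendsto_iff_dist_tendsto_zero]
  have hbound : ContinuousWithinAt
      (fun y => K * |φ y - φ x| + L * |y - x| * (1 + |φ y| + |φ x|)) (Γ.edge α) x :=
    ((((hφ x hx).sub continuousWithinAt_const).abs).const_mul K).add
      ((((continuousWithinAt_id.sub continuousWithinAt_const).abs).const_mul L).mul
        ((continuousWithinAt_const.add (hφ x hx).abs).add continuousWithinAt_const))
  refine squeeze_zero' (.of_forall fun _ => dist_nonneg) ?_ (by simpa using hbound.tendsto)
  filter_upwards [self_mem_nhdsWithin] with y hy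
  exact hbf.abs_ham_sub_ham_le hy hx _ _

theorem H2cond.ham_le_ham_add_of_abs_sub_le (hbf : H2cond Γ A b f K L) (hy : y ∈ Γ.edge α)
    {Db Df : ℝ} (hb : ∀ a, |b α y a - b' α y a| ≤ Db) (hf : ∀ a, |f α y a - f' α y a| ≤ Df)
    (p : ℝ) : ham Γ A b' f' α y p ≤ ham Γ A b f α y p + (|p| * Db + Df) := by
  refine hbf.ham_le_ham_add hy fun a => ?_
  have h₁ : (b α y a - b' α y a) * p ≤ |p| * Db :=
    (le_abs_self _).trans <| by
      rw [abs_mul, mul_comm]; exact mul_le_mul_of_nonneg_left (hb a) (abs_nonneg p)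
  have h₂ : f α y a - f' α y a ≤ Df := (le_abs_self _).trans (hf a)
  linarith

end BellmanHamiltonian

namespace Network

variable {Γ : Network} {v w : Γ.ι → ℝ → ℝ} {α : Γ.ι} {y : ℝ}

theorem zero_mem_edge (α : Γ.ι) : (0 : ℝ) ∈ Γ.edge α := ⟨le_rfl, (Γ.ℓ_pos α).le⟩

theorem ℓ_mem_edge (α : Γ.ι) : Γ.ℓ α ∈ Γ.edge α := ⟨(Γ.ℓ_pos α).le, le_rfl⟩

theorem uniqueDiffOn_edge (α : Γ.ι) : UniqueDiffOn ℝ (Γ.edge α) := uniqueDiffOn_Icc (Γ.ℓ_pos α)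

theorem Cm.contDiffOn (hv : Γ.Cm 2 v) (α : Γ.ι) : ContDiffOn ℝ 2 (v α) (Γ.edge α) := by
  exact_mod_cast hv.1 α

theorem Cm.continuousOn_d1 (hv : Γ.Cm 2 v) (α : Γ.ι) : ContinuousOn (Γ.d1 v α) (Γ.edge α) :=
  (hv.contDiffOn α).continuousOn_derivWithin (uniqueDiffOn_edge α) (by norm_num)

theorem Cm.continuousOn_d2 (hv : Γ.Cm 2 v) (α : Γ.ι) : ContinuousOn (Γ.d2 v α) (Γ.edge α) :=
  ((hv.contDiffOn α).derivWithin (uniqueDiffOn_edge α) (m := 1) le_rfl).continuousOn_derivWithin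
    (uniqueDiffOn_edge α) le_rfl

theorem d1_sub (hv : DifferentiableOn ℝ (v α) (Γ.edge α)) (hw : DifferentiableOn ℝ (w α) (Γ.edge α))
    (hy : y ∈ Γ.edge α) : Γ.d1 (v - w) α y = Γ.d1 v α y - Γ.d1 w α y :=
  derivWithin_sub (hv y hy) (hw y hy)

theorem d2_sub (hv : ContDiffOn ℝ 2 (v α) (Γ.edge α)) (hw : ContDiffOn ℝ 2 (w α) (Γ.edge α))
    (hy : y ∈ Γ.edge α) : Γ.d2 (v - w) α y = Γ.d2 v α y - Γ.d2 w α y := by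
  have hu := uniqueDiffOn_edge α
  have hd1 : ∀ z ∈ Γ.edge α, Γ.d1 (v - w) α z = (Γ.d1 v α - Γ.d1 w α) z := fun z hz =>
    d1_sub (hv.differentiableOn (by norm_num)) (hw.differentiableOn (by norm_num)) hz
  rw [d2, derivWithin_congr hd1 (hd1 y hy)]
  exact derivWithin_sub (((hv.derivWithin hu (m := 1) le_rfl).differentiableOn one_ne_zero) y hy)
    (((hw.derivWithin hu (m := 1) le_rfl).differentiableOn one_ne_zero) y hy)

theorem valAt_sub (i : Γ.I) : Γ.valAt (v - w) α i = Γ.valAt v α i - Γ.valAt w α i := by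
  unfold valAt
  split_ifs <;> rfl

theorem outDeriv_sub (hv : DifferentiableOn ℝ (v α) (Γ.edge α))
    (hw : DifferentiableOn ℝ (w α) (Γ.edge α)) (i : Γ.I) :
    Γ.outDeriv (v - w) α i = Γ.outDeriv v α i - Γ.outDeriv w α i := by
  unfold outDeriv
  split_ifs
  · rw [d1_sub hv hw (zero_mem_edge α)]
    ring
  · exact d1_sub hv hw (ℓ_mem_edge α)

theorem VertexCont.sub (hv : Γ.VertexCont v) (hw : Γ.VertexCont w) : Γ.VertexCont (v - w) :=
  fun i α hα β hβ => by rw [valAt_sub, valAt_sub, hv i α hα β hβ, hw i α hα β hβ]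

theorem exists_isMax [Nonempty Γ.ι] (hw : ∀ α, ContinuousOn (w α) (Γ.edge α)) :
    ∃ α, ∃ y ∈ Γ.edge α, ∀ β, ∀ z ∈ Γ.edge β, w β z ≤ w α y := by
  choose ymax hymem hymax using fun α => isCompact_Icc.exists_isMaxOn ⟨0, zero_mem_edge α⟩ (hw α)
  obtain ⟨α, hα⟩ := Finite.exists_max fun α => w α (ymax α)
  exact ⟨α, ymax α, hymem α, fun β z hz => (hymax β hz).trans (hα β)⟩

variable {M : ℝ} {i : Γ.I}

theorem outDeriv_nonneg_of_valAt_eq_max (hmax : ∀ z ∈ Γ.edge α, w α z ≤ M)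
    (hval : Γ.valAt w α i = M) : 0 ≤ Γ.outDeriv w α i := by
  unfold valAt at hval
  unfold outDeriv
  split_ifs at hval ⊢
  · exact neg_nonneg.2 <| IsMaxOn.derivWithin_Icc_nonpos (fun z hz => hval ▸ hmax z hz)
      (zero_mem_edge α) (Γ.ℓ_pos α)
  · exact IsMaxOn.derivWithin_Icc_nonneg (fun z hz => hval ▸ hmax z hz) (ℓ_mem_edge α)
      (Γ.ℓ_pos α)

theorem outDeriv_eq_zero_of_valAt_eq_max {μ : Γ.ι → ℝ} {γ : Γ.I → Γ.ι → ℝ}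
    (hμ : ∀ β, 0 < μ β) (hγ : ∀ β ∈ Γ.adj i, 0 < γ i β) (hcont : Γ.VertexCont w)
    (hkir : ∑ β ∈ Γ.adj i, γ i β * μ β * Γ.outDeriv w β i = 0)
    (hmax : ∀ β, ∀ z ∈ Γ.edge β, w β z ≤ M) (hα : α ∈ Γ.adj i) (hval : Γ.valAt w α i = M) :
    Γ.outDeriv w α i = 0 := by
  have hnn : ∀ β ∈ Γ.adj i, 0 ≤ γ i β * μ β * Γ.outDeriv w β i := fun β hβ =>
    mul_nonneg (mul_pos (hγ β hβ) (hμ β)).le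
      (outDeriv_nonneg_of_valAt_eq_max (hmax β) ((hcont i β hβ α hα).trans hval))
  exact (mul_eq_zero.1 ((Finset.sum_eq_zero_iff_of_nonneg hnn).1 hkir α hα)).resolve_left
    (mul_pos (hγ α hα) (hμ α)).ne'

theorem d1_eq_zero_of_isMax {μ : Γ.ι → ℝ} {γ : Γ.I → Γ.ι → ℝ}
    (hμ : ∀ β, 0 < μ β) (hγ : ∀ i, ∀ β ∈ Γ.adj i, 0 < γ i β) (hcont : Γ.VertexCont w)
    (hkir : ∀ i, ∑ β ∈ Γ.adj i, γ i β * μ β * Γ.outDeriv w β i = 0)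
    (hmax : ∀ β, ∀ z ∈ Γ.edge β, w β z ≤ w α y) (hy : y ∈ Γ.edge α) : Γ.d1 w α y = 0 := by
  have hvertex := fun i => outDeriv_eq_zero_of_valAt_eq_max (α := α) hμ (hγ i) hcont (hkir i) hmax
  rcases hy.1.eq_or_lt with rfl | h0
  · have h := hvertex (Γ.e0 α) (Finset.mem_filter.2 ⟨Finset.mem_univ _, Or.inl rfl⟩)
      (if_pos rfl)
    rwa [outDeriv, if_pos rfl, neg_eq_zero] at h
  rcases hy.2.eq_or_lt with rfl | hℓ
  · have h := hvertex (Γ.e1 α) (Finset.mem_filter.2 ⟨Finset.mem_univ _, Or.inr rfl⟩)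
      (if_neg (Γ.no_loop α))
    rwa [outDeriv, if_neg (Γ.no_loop α)] at h
  · exact le_antisymm (IsMaxOn.derivWithin_Icc_nonpos (hmax α) hy hℓ)
      (IsMaxOn.derivWithin_Icc_nonneg (hmax α) hy h0)

end Network

namespace Network

variable {Γ : Network} {v : Γ.ι → ℝ → ℝ} {α : Γ.ι} {y : ℝ}

theorem esup_nonneg (g : ℝ → ℝ) (α : Γ.ι) : 0 ≤ Γ.esup g α :=
  Real.sSup_nonneg (by rintro _ ⟨z, -, rfl⟩; exact abs_nonneg _)

theorem abs_le_esup {g : ℝ → ℝ} (hg : BddAbove ((fun y => |g y|) '' Γ.edge α))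
    (hy : y ∈ Γ.edge α) : |g y| ≤ Γ.esup g α :=
  le_csSup hg ⟨y, hy, rfl⟩

theorem esup_d1_le_C2θnorm (θ : ℝ) (α : Γ.ι) : Γ.esup (Γ.d1 v α) α ≤ Γ.C2θnorm θ v := by
  have hsum := Finset.single_le_sum (s := Finset.univ)
    (f := fun β => Γ.esup (v β) β + Γ.esup (Γ.d1 v β) β + Γ.esup (Γ.d2 v β) β)
    (fun β _ => add_nonneg (add_nonneg (esup_nonneg _ _) (esup_nonneg _ _)) (esup_nonneg _ _))
    (Finset.mem_univ α)
  have hhol : 0 ≤ ⨆ β, holderSemi θ (Γ.d2 v β) (Γ.edge β) :=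
    Real.iSup_nonneg fun β => Real.sSup_nonneg (by rintro _ ⟨_, -, _, -, -, rfl⟩; positivity)
  unfold C2θnorm C2norm
  linarith [esup_nonneg (v α) α, esup_nonneg (Γ.d2 v α) α]

theorem d1_sub_const (c : ℝ) : Γ.d1 (fun α y => v α y - c) = Γ.d1 v :=
  funext fun _ => funext fun _ => derivWithin_sub_const c

theorem abs_d1_le_C2θnorm_sub_const (hv : ContinuousOn (Γ.d1 v α) (Γ.edge α))
    (hy : y ∈ Γ.edge α) (θ c : ℝ) : |Γ.d1 v α y| ≤ Γ.C2θnorm θ (fun α y => v α y - c) := by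
  rw [← d1_sub_const c] at hv ⊢
  exact (abs_le_esup (isCompact_Icc.image_of_continuousOn hv.abs).bddAbove hy).trans
    (esup_d1_le_C2θnorm θ α)

theorem abs_sub_le_esup {g₁ g₂ : Γ.ι → ℝ → ℝ} {C : ℝ} (h₁ : ∀ β, ∀ z ∈ Γ.edge β, |g₁ β z| ≤ C)
    (h₂ : ∀ β, ∀ z ∈ Γ.edge β, |g₂ β z| ≤ C) :
    ∀ β, ∀ z ∈ Γ.edge β, |g₁ β z - g₂ β z| ≤ Γ.esup (fun y => g₁ β y - g₂ β y) β :=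
  fun β z hz => abs_le_esup ⟨C + C, by
    rintro _ ⟨z, hz, rfl⟩; exact (abs_sub _ _).trans (add_le_add (h₁ β z hz) (h₂ β z hz))⟩ hz

theorem abs_sub_le_supAbsBF {A : Type} {g₁ g₂ : Γ.ι → ℝ → A → ℝ} {C : ℝ}
    (h₁ : ∀ β, ∀ z ∈ Γ.edge β, ∀ a, |g₁ β z a| ≤ C)
    (h₂ : ∀ β, ∀ z ∈ Γ.edge β, ∀ a, |g₂ β z a| ≤ C) :
    ∀ β, ∀ z ∈ Γ.edge β, ∀ a, |g₁ β z a - g₂ β z a| ≤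
      supAbsBF Γ A (fun β y a => g₁ β y a - g₂ β y a) β :=
  fun β z hz a => le_csSup ⟨C + C, by
    rintro _ ⟨z, hz, a, rfl⟩; exact (abs_sub _ _).trans (add_le_add (h₁ β z hz a) (h₂ β z hz a))⟩
    ⟨z, hz, a, rfl⟩

variable {Γ : Network} {μ : Γ.ι → ℝ} {γ : Γ.I → Γ.ι → ℝ} {A : Type} [TopologicalSpace A]
  [Nonempty A] {b f b1 f1 b2 f2 : Γ.ι → ℝ → A → ℝ} {F1 F2 : Γ.ι → ℝ → ℝ} {K L lam : ℝ}
  {v v1 v2 : Γ.ι → ℝ → ℝ} {α : Γ.ι} {y : ℝ}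

theorem Cm.continuousOn_discountedOperator (hv : Γ.Cm 2 v) (hbf : H2cond Γ A b f K L) :
    ContinuousOn (fun z => -(μ α) * Γ.d2 v α z + ham Γ A b f α z (Γ.d1 v α z) + lam * v α z)
      (Γ.edge α) :=
  ((continuousOn_const.mul (hv.continuousOn_d2 α)).add
    (hbf.continuousOn_ham_comp (hv.continuousOn_d1 α))).add
      (continuousOn_const.mul (hv.contDiffOn α).continuousOn)

theorem IsDiscountedSol.lam_mul_sub_le_of_isMax (hμ : ∀ β, 0 < μ β)
    (hγ : ∀ i, ∀ β ∈ Γ.adj i, 0 < γ i β) (h1 : H2cond Γ A b1 f1 K L) (h2 : H2cond Γ A b2 f2 K L)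
    (hv1 : Γ.IsDiscountedSol μ γ (fun α y p => ham Γ A b1 f1 α y p + F1 α y) lam v1)
    (hv2 : Γ.IsDiscountedSol μ γ (fun α y p => ham Γ A b2 f2 α y p + F2 α y) lam v2)
    {Db Df DF : ℝ} (hb : ∀ a, |b1 α y a - b2 α y a| ≤ Db)
    (hf : ∀ a, |f1 α y a - f2 α y a| ≤ Df) (hF : ∀ z ∈ Γ.edge α, |F1 α z - F2 α z| ≤ DF)
    (hmax : ∀ β, ∀ z ∈ Γ.edge β, v1 β z - v2 β z ≤ v1 α y - v2 α y) (hy : y ∈ Γ.edge α) :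
    lam * (v1 α y - v2 α y) ≤ |Γ.d1 v1 α y| * Db + Df + DF := by
  obtain ⟨hC1, hpde1, hkir1⟩ := hv1
  obtain ⟨hC2, hpde2, hkir2⟩ := hv2
  have hd1 := fun β => (hC1.contDiffOn β).differentiableOn two_ne_zero
  have hd2 := fun β => (hC2.contDiffOn β).differentiableOn two_ne_zero
  have hkir : ∀ i, ∑ β ∈ Γ.adj i, γ i β * μ β * Γ.outDeriv (v1 - v2) β i = 0 := fun i => by
    simp only [outDeriv_sub (hd1 _) (hd2 _), mul_sub, Finset.sum_sub_distrib, hkir1 i, hkir2 i,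
      sub_self]
  have hdw : Γ.d1 (v1 - v2) α y = 0 := d1_eq_zero_of_isMax hμ hγ (hC1.2.sub hC2.2) hkir hmax hy
  have hp : Γ.d1 v2 α y = Γ.d1 v1 α y := by
    rw [d1_sub (hd1 α) (hd2 α) hy] at hdw
    linarith
  have hd2w : Γ.d2 v1 α y - Γ.d2 v2 α y ≤ 0 := by
    rw [← d2_sub (hC1.contDiffOn α) (hC2.contDiffOn α) hy]
    exact IsMaxOn.derivWithin_derivWithin_Icc_nonpos (Γ.ℓ_pos α)
      ((hC1.contDiffOn α).sub (hC2.contDiffOn α)) (hmax α) hy hdw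
  have hres := ContinuousOn.abs_le_of_forall_Ioo (c := DF) (Γ.ℓ_pos α)
    ((hC1.continuousOn_discountedOperator (μ := μ) (lam := lam) h1).sub
      (hC2.continuousOn_discountedOperator (μ := μ) (lam := lam) h2))
    (fun z hz => by
      have e1 := hpde1 α z hz
      have e2 := hpde2 α z hz
      beta_reduce at e1 e2
      rw [Pi.sub_apply, ← abs_neg]
      convert hF z (Ioo_subset_Icc_self hz) using 2
      linarith) y hy
  have hham := h1.ham_le_ham_add_of_abs_sub_le hy hb hf (Γ.d1 v1 α y)
  have hμd2 := mul_nonpos_of_nonneg_of_nonpos (hμ α).le hd2w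
  rw [Pi.sub_apply, hp] at hres
  linarith [(abs_le.1 hres).2]

theorem IsDiscountedSol.lam_mul_sub_le_iSup (hμ : ∀ β, 0 < μ β)
    (hγ : ∀ i, ∀ β ∈ Γ.adj i, 0 < γ i β) (h1 : H2cond Γ A b1 f1 K L) (h2 : H2cond Γ A b2 f2 K L)
    (hlam : 0 ≤ lam)
    (hv1 : Γ.IsDiscountedSol μ γ (fun α y p => ham Γ A b1 f1 α y p + F1 α y) lam v1)
    (hv2 : Γ.IsDiscountedSol μ γ (fun α y p => ham Γ A b2 f2 α y p + F2 α y) lam v2)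
    {Kbar : ℝ} {Db Df DF : Γ.ι → ℝ} (hgrad : ∀ β, ∀ z ∈ Γ.edge β, |Γ.d1 v1 β z| ≤ Kbar)
    (hb : ∀ β, ∀ z ∈ Γ.edge β, ∀ a, |b1 β z a - b2 β z a| ≤ Db β)
    (hf : ∀ β, ∀ z ∈ Γ.edge β, ∀ a, |f1 β z a - f2 β z a| ≤ Df β)
    (hF : ∀ β, ∀ z ∈ Γ.edge β, |F1 β z - F2 β z| ≤ DF β) (hy : y ∈ Γ.edge α) :
    lam * (v1 α y - v2 α y) ≤ ⨆ β, (Kbar * Db β + Df β + DF β) := by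
  have : Nonempty Γ.ι := ⟨α⟩
  obtain ⟨α₀, y₀, hy₀, hmax⟩ := exists_isMax (w := v1 - v2) fun β =>
    ((hv1.1.contDiffOn β).sub (hv2.1.contDiffOn β)).continuousOn
  obtain ⟨a⟩ := ‹Nonempty A›
  have hDb : 0 ≤ Db α₀ := (abs_nonneg _).trans (hb α₀ y₀ hy₀ a)
  calc lam * (v1 α y - v2 α y) ≤ lam * (v1 α₀ y₀ - v2 α₀ y₀) :=
        mul_le_mul_of_nonneg_left (hmax α y hy) hlam
    _ ≤ |Γ.d1 v1 α₀ y₀| * Db α₀ + Df α₀ + DF α₀ :=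
        hv1.lam_mul_sub_le_of_isMax hμ hγ h1 h2 hv2 (hb α₀ y₀ hy₀) (hf α₀ y₀ hy₀) (hF α₀) hmax
          hy₀
    _ ≤ Kbar * Db α₀ + Df α₀ + DF α₀ := by gcongr; exact hgrad α₀ y₀ hy₀
    _ ≤ ⨆ β, (Kbar * Db β + Df β + DF β) :=
        le_ciSup (f := fun β => Kbar * Db β + Df β + DF β) (Set.finite_range _).bddAbove α₀

end Network

theorem discounted_Linfty_estimate_general
    (Γ : Network)
    (μ : Γ.ι → ℝ) (γ : Γ.I → Γ.ι → ℝ) (hH1 : Γ.H1cond μ γ)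
    (A : Type) [MetricSpace A] [Nonempty A]
    (b1 f1 b2 f2 : Γ.ι → ℝ → A → ℝ) (F1 F2 : Γ.ι → ℝ → ℝ)
    (K L KF : ℝ)
    (h1 : H2cond Γ A b1 f1 K L) (h2 : H2cond Γ A b2 f2 K L)
    (hF1 : ∀ α, ∀ y ∈ Γ.edge α, |F1 α y| ≤ KF)
    (hF2 : ∀ α, ∀ y ∈ Γ.edge α, |F2 α y| ≤ KF)
    (θ Kbar : ℝ)
    (lam : ℝ) (hlam : lam ∈ Ioo (0:ℝ) 1)
    (v1 v2 : Γ.ι → ℝ → ℝ)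
    (hv1 : Γ.IsDiscountedSol μ γ (fun α y p => ham Γ A b1 f1 α y p + F1 α y) lam v1)
    (hv2 : Γ.IsDiscountedSol μ γ (fun α y p => ham Γ A b2 f2 α y p + F2 α y) lam v2)
    -- `K̄` is the a priori `C^{2,θ}(Γ)` bound for the normalized solutions
    (hK1 : Γ.C2θnorm θ (fun α y => v1 α y - Γ.avg v1) ≤ Kbar)
    (hK2 : Γ.C2θnorm θ (fun α y => v2 α y - Γ.avg v2) ≤ Kbar) :
    ∀ α, ∀ y ∈ Γ.edge α,
      lam * |v1 α y - v2 α y| ≤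
        ⨆ β : Γ.ι,
          (Kbar * supAbsBF Γ A (fun β' y' a => b1 β' y' a - b2 β' y' a) β +
            supAbsBF Γ A (fun β' y' a => f1 β' y' a - f2 β' y' a) β +
            Γ.esup (fun y' => F1 β y' - F2 β y') β) := by
  intro α y hy
  have hb := Network.abs_sub_le_supAbsBF (fun β z hz a => (h1.bound hz a).1)
    (fun β z hz a => (h2.bound hz a).1)
  have hf := Network.abs_sub_le_supAbsBF (fun β z hz a => (h1.bound hz a).2)
    (fun β z hz a => (h2.bound hz a).2)
  have hF := Network.abs_sub_le_esup hF1 hF2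
  have hgrad1 : ∀ β, ∀ z ∈ Γ.edge β, |Γ.d1 v1 β z| ≤ Kbar := fun β z hz =>
    (Network.abs_d1_le_C2θnorm_sub_const (hv1.1.continuousOn_d1 β) hz θ _).trans hK1
  have hgrad2 : ∀ β, ∀ z ∈ Γ.edge β, |Γ.d1 v2 β z| ≤ Kbar := fun β z hz =>
    (Network.abs_d1_le_C2θnorm_sub_const (hv2.1.continuousOn_d1 β) hz θ _).trans hK2
  rcases abs_cases (v1 α y - v2 α y) with ⟨habs, -⟩ | ⟨habs, -⟩
  · rw [habs]
    exact hv1.lam_mul_sub_le_iSup hH1.1 hH1.2.1 h1 h2 hlam.1.le hv2 hgrad1 hb hf hF hy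
  · rw [habs, neg_sub]
    exact hv2.lam_mul_sub_le_iSup hH1.1 hH1.2.1 h2 h1 hlam.1.le hv1 hgrad2
      (fun β z hz a => (abs_sub_comm _ _).trans_le (hb β z hz a))
      (fun β z hz a => (abs_sub_comm _ _).trans_le (hf β z hz a))
      (fun β z hz => (abs_sub_comm _ _).trans_le (hF β z hz)) hy

/-- estimate (3.9), `L∞` estimate for the discounted values.
Assume (H1) and let `b^i_α, f^i_α` (`i = 1,2`) satisfy (H2) with the same constants `K, L`,
let `H^i_α(x,p) = sup_{a∈A}{-b^i_α(x,a)p - f^i_α(x,a)}`, and let `F^i : Γ → ℝ` be bounded.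
For `λ ∈ (0,1)` let `v^λ_i` be the classical solution of the discounted problem with
Hamiltonian `H^i_α(x,p) + F^i_α(x)`. Then
`λ‖v^λ_1 - v^λ_2‖_{L∞(Γ)} ≤ max_α ( K̄ max_{x,a}|b¹_α - b²_α| + max_{x,a}|f¹_α - f²_α|
+ max_x |F¹_α - F²_α| )`, where `K̄ = C₁(1+K+L)` is the a priori `C^{2,θ}(Γ)` bound for
`v^λ_i - ⟨v^λ_i⟩`. -/
theorem discounted_Linfty_estimate
    (Γ : Network) (hconn : Γ.Conn)
    (μ : Γ.ι → ℝ) (γ : Γ.I → Γ.ι → ℝ) (hH1 : Γ.H1cond μ γ)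
    (A : Type) [MetricSpace A] [CompactSpace A] [Nonempty A]
    (b1 f1 b2 f2 : Γ.ι → ℝ → A → ℝ) (F1 F2 : Γ.ι → ℝ → ℝ)
    (K L KF : ℝ)
    (h1 : H2cond Γ A b1 f1 K L) (h2 : H2cond Γ A b2 f2 K L)
    (hF1 : ∀ α, ∀ y ∈ Γ.edge α, |F1 α y| ≤ KF)
    (hF2 : ∀ α, ∀ y ∈ Γ.edge α, |F2 α y| ≤ KF)
    (θ Kbar : ℝ) (hθ : θ ∈ Ioo (0:ℝ) 1)
    (lam : ℝ) (hlam : lam ∈ Ioo (0:ℝ) 1)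
    (v1 v2 : Γ.ι → ℝ → ℝ)
    (hv1 : Γ.IsDiscountedSol μ γ (fun α y p => ham Γ A b1 f1 α y p + F1 α y) lam v1)
    (hv2 : Γ.IsDiscountedSol μ γ (fun α y p => ham Γ A b2 f2 α y p + F2 α y) lam v2)
    -- `K̄` is the a priori `C^{2,θ}(Γ)` bound for the normalized solutions
    (hK1 : Γ.C2θnorm θ (fun α y => v1 α y - Γ.avg v1) ≤ Kbar)
    (hK2 : Γ.C2θnorm θ (fun α y => v2 α y - Γ.avg v2) ≤ Kbar) :
    ∀ α, ∀ y ∈ Γ.edge α,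
      lam * |v1 α y - v2 α y| ≤
        ⨆ β : Γ.ι,
          (Kbar * supAbsBF Γ A (fun β' y' a => b1 β' y' a - b2 β' y' a) β +
            supAbsBF Γ A (fun β' y' a => f1 β' y' a - f2 β' y' a) β +
            Γ.esup (fun y' => F1 β y' - F2 β y') β) :=
  discounted_Linfty_estimate_general Γ μ γ hH1 A b1 f1 b2 f2 F1 F2 K L KF h1 h2 hF1 hF2 θ Kbar lam
    hlam v1 v2 hv1 hv2 hK1 hK2
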